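/- Decomposition lemma for measures on two horizontal lines: A bivariate sequence β of degree 2k has a representing measure supported on {(x,y) : y(y-1) = 0} if and only if β = β̃ + β̂, where β̃ has a representing measure supported on the line y = 0 and β̂ has a representing measure supported on the line y = 1. Moreover, in any such decomposition, β̃_{i,j} = 0 for j ≥ 1 and β̂_{i,j} = β_{i,j} for all j ≥ 1, i + j ≤ 2k; and β̂_{i,0} = β_{i,1} for i ≤ 2k - 1. -/

import Mathlib

open Matrix MeasureTheory

/-- Index set of bivariate monomials x^i y^j of total degree ≤ k. -/
def momIdx (k : ℕ) : Finset (ℕ × ℕ) :=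
  (Finset.range (k+1) ×ˢ Finset.range (k+1)).filter (fun p => p.1 + p.2 ≤ k)

/-- The bivariate moment matrix M_k(β), indexed by monomials of total degree ≤ k. -/
def momMat (k : ℕ) (β : ℕ → ℕ → ℝ) : Matrix (momIdx k) (momIdx k) ℝ :=
  fun p q => β (p.1.1 + q.1.1) (p.1.2 + q.1.2)

/-- β has a representing measure supported in K ⊆ ℝ²: a positive Borel measure μ with
μ(Kᶜ) = 0 whose moments up to degree 2k match β. -/
def RepOn (k : ℕ) (β : ℕ → ℕ → ℝ) (K : Set (ℝ × ℝ)) : Prop :=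
  ∃ μ : Measure (ℝ × ℝ),
    (∀ i j : ℕ, i + j ≤ 2*k → Integrable (fun z : ℝ × ℝ => z.1 ^ i * z.2 ^ j) μ) ∧
    (∀ i j : ℕ, i + j ≤ 2*k → β i j = ∫ z, z.1 ^ i * z.2 ^ j ∂μ) ∧
    μ Kᶜ = 0

/-! Restricting a measure on the two lines to `y = 0` and to its complement splits it into
measures on the separate lines, and adding measures goes back. On a line `y = c` one has
`y ^ j = c ^ j`, so every moment is `c ^ j * β i 0`: for `c = 0` the moments with `j ≥ 1`
vanish, and for `c = 1` they do not depend on `j`. -/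

namespace RepOn

variable {k : ℕ} {β β₁ β₂ : ℕ → ℕ → ℝ} {K L : Set (ℝ × ℝ)}

lemma mono (h : RepOn k β K) (hKL : K ⊆ L) : RepOn k β L :=
  let ⟨μ, hint, hmom, hsupp⟩ := h
  ⟨μ, hint, hmom, measure_mono_null (Set.compl_subset_compl.mpr hKL) hsupp⟩

lemma congr (h : RepOn k β₁ K) (hβ : ∀ i j : ℕ, i + j ≤ 2*k → β₁ i j = β₂ i j) :
    RepOn k β₂ K :=
  let ⟨μ, hint, hmom, hsupp⟩ := h
  ⟨μ, hint, fun i j hij => (hβ i j hij).symm.trans (hmom i j hij), hsupp⟩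

lemma add (h₁ : RepOn k β₁ K) (h₂ : RepOn k β₂ K) : RepOn k (β₁ + β₂) K := by
  obtain ⟨μ₁, hint₁, hmom₁, hsupp₁⟩ := h₁
  obtain ⟨μ₂, hint₂, hmom₂, hsupp₂⟩ := h₂
  refine ⟨μ₁ + μ₂, fun i j hij => (hint₁ i j hij).add_measure (hint₂ i j hij),
    fun i j hij => ?_, by simp [hsupp₁, hsupp₂]⟩
  rw [integral_add_measure (hint₁ i j hij) (hint₂ i j hij), ← hmom₁ i j hij, ← hmom₂ i j hij,
    Pi.add_apply, Pi.add_apply]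

lemma exists_split_of_measurableSet {S : Set (ℝ × ℝ)} (hS : MeasurableSet S)
    (h : RepOn k β K) :
    ∃ β₁ β₂ : ℕ → ℕ → ℝ, (∀ i j : ℕ, i + j ≤ 2*k → β i j = β₁ i j + β₂ i j) ∧
      RepOn k β₁ (K ∩ S) ∧ RepOn k β₂ (K \ S) := by
  obtain ⟨μ, hint, hmom, hsupp⟩ := h
  have hsupp_restrict : ∀ T : Set (ℝ × ℝ), MeasurableSet T → (μ.restrict T) (K ∩ T)ᶜ = 0 :=
    fun T hT => by
      rw [Measure.restrict_apply' hT]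
      exact measure_mono_null (fun z ⟨hz, hzT⟩ => fun hzK => hz ⟨hzK, hzT⟩) hsupp
  refine ⟨fun i j => ∫ z, z.1 ^ i * z.2 ^ j ∂(μ.restrict S),
    fun i j => ∫ z, z.1 ^ i * z.2 ^ j ∂(μ.restrict Sᶜ), fun i j hij => ?_,
    ⟨μ.restrict S, fun i j hij => (hint i j hij).restrict, fun _ _ _ => rfl,
      hsupp_restrict S hS⟩,
    ⟨μ.restrict Sᶜ, fun i j hij => (hint i j hij).restrict, fun _ _ _ => rfl,
      hsupp_restrict Sᶜ hS.compl⟩⟩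
  rw [hmom i j hij, integral_add_compl hS (hint i j hij)]

lemma eq_pow_mul_of_snd_eq {c : ℝ} (h : RepOn k β {z : ℝ × ℝ | z.2 = c}) {i j : ℕ}
    (hij : i + j ≤ 2*k) : β i j = c ^ j * β i 0 := by
  obtain ⟨μ, -, hmom, hsupp⟩ := h
  rw [hmom i j hij, hmom i 0 (by omega), ← integral_const_mul]
  refine integral_congr_ae ?_
  filter_upwards [mem_ae_iff.mpr hsupp] with z (hz : z.2 = c)
  rw [hz, pow_zero]
  ring

end RepOn

theorem stmt16 (k : ℕ) (β : ℕ → ℕ → ℝ) :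
    (RepOn k β {z : ℝ × ℝ | z.2 * (z.2 - 1) = 0} ↔
      ∃ β₁ β₂ : ℕ → ℕ → ℝ,
        (∀ i j : ℕ, i + j ≤ 2*k → β i j = β₁ i j + β₂ i j) ∧
        RepOn k β₁ {z : ℝ × ℝ | z.2 = 0} ∧ RepOn k β₂ {z : ℝ × ℝ | z.2 = 1}) ∧
    (∀ β₁ β₂ : ℕ → ℕ → ℝ,
      (∀ i j : ℕ, i + j ≤ 2*k → β i j = β₁ i j + β₂ i j) →
      RepOn k β₁ {z : ℝ × ℝ | z.2 = 0} → RepOn k β₂ {z : ℝ × ℝ | z.2 = 1} →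
      (∀ i j : ℕ, 1 ≤ j → i + j ≤ 2*k → β₁ i j = 0 ∧ β₂ i j = β i j) ∧
      (∀ i : ℕ, i + 1 ≤ 2*k → β₂ i 0 = β i 1)) := by
  set K := {z : ℝ × ℝ | z.2 * (z.2 - 1) = 0}
  have hline₀ : {z : ℝ × ℝ | z.2 = 0} ⊆ K := fun z (hz : z.2 = 0) => by simp [K, hz]
  have hline₁ : {z : ℝ × ℝ | z.2 = 1} ⊆ K := fun z (hz : z.2 = 1) => by simp [K, hz]
  have hsplit : K \ {z : ℝ × ℝ | z.2 = 0} ⊆ {z : ℝ × ℝ | z.2 = 1} :=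
    fun z ⟨(hK : z.2 * (z.2 - 1) = 0), (h₀ : z.2 ≠ 0)⟩ =>
      sub_eq_zero.mp ((mul_eq_zero.mp hK).resolve_left h₀)
  refine ⟨⟨fun h => ?_, fun ⟨β₁, β₂, hadd, h₁, h₂⟩ => ?_⟩, fun β₁ β₂ hadd h₁ h₂ => ?_⟩
  · obtain ⟨β₁, β₂, hadd, h₁, h₂⟩ :=
      h.exists_split_of_measurableSet ((measurableSet_singleton 0).preimage measurable_snd)
    exact ⟨β₁, β₂, hadd, h₁.mono Set.inter_subset_right, h₂.mono hsplit⟩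
  · exact ((h₁.mono hline₀).add (h₂.mono hline₁)).congr fun i j hij => (hadd i j hij).symm
  · have hβ₁ : ∀ i j : ℕ, 1 ≤ j → i + j ≤ 2*k → β₁ i j = 0 := fun i j hj hij => by
      rw [h₁.eq_pow_mul_of_snd_eq hij, zero_pow (by omega), zero_mul]
    have hβ₂ : ∀ i j : ℕ, 1 ≤ j → i + j ≤ 2*k → β₂ i j = β i j := fun i j hj hij => by
      rw [hadd i j hij, hβ₁ i j hj hij, zero_add]
    refine ⟨fun i j hj hij => ⟨hβ₁ i j hj hij, hβ₂ i j hj hij⟩, fun i hi => ?_⟩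
    rw [← hβ₂ i 1 le_rfl hi, h₂.eq_pow_mul_of_snd_eq hi, one_pow, one_mul]
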